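/- (Converse direction of the isometry lemma) If V ∈ C^{N×K} has full column rank and V^H V is not a positive multiple of the identity, then there exist nonzero b₁, b₂ ∈ C^K with d(Vb₁, Vb₂) ≠ d(b₁, b₂). Specifically: if (V^H V)_{ij} ≠ 0 for some i ≠ j then d(e_i, e_j) = 1 but d(Ve_i, Ve_j) < 1; if V^H V is diagonal with (V^H V)_{ii} ≠ (V^H V)_{jj}, then d(e_i, (e_i+e_j)/√2) ≠ d(Ve_i, V(e_i+e_j)/√2). -/

import Mathlib

open Matrix

/-- Squared Euclidean norm of a complex vector. -/
noncomputable def nsq {n : ℕ} (x : Fin n → ℂ) : ℝ := (star x ⬝ᵥ x).re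

/-- Squared chordal distance between two (nonzero) complex vectors. -/
noncomputable def chordalSq {n : ℕ} (x y : Fin n → ℂ) : ℝ :=
  1 - (‖star x ⬝ᵥ y‖) ^ 2 / (nsq x * nsq y)

/-- Standard basis vector of `ℂ^K`. -/
noncomputable def stdBasis {K : ℕ} (i : Fin K) : Fin K → ℂ := Pi.single i 1

/-!
Write `G = Vᴴ V`, so that `⟪V x, V y⟫ = ⟪x, G y⟫` and chordal distances between images of basis
vectors are read off `G`. An off-diagonal entry `G i j ≠ 0` makes `V eᵢ` and `V eⱼ` non-orthogonal,
although `eᵢ ⊥ eⱼ`. If `G` is diagonal, then `d²(V eᵢ, V (eᵢ + eⱼ)) = 1 - Gᵢᵢ / (Gᵢᵢ + Gⱼⱼ)`, which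
equals `d²(eᵢ, eᵢ + eⱼ) = 1 / 2` only if `Gᵢᵢ = Gⱼⱼ`; the factor `1 / √2` is irrelevant since the
chordal distance is scale invariant. Otherwise `G` is a multiple of the identity, and the multiple
is positive because `V` has full column rank.
-/

open scoped ComplexOrder

theorem Matrix.mulVec_ne_zero_of_rank_eq_card {m n K : Type*} [Fintype n] [DecidableEq n]
    [Field K] {A : Matrix m n K} (hA : A.rank = Fintype.card n) {v : n → K} (hv : v ≠ 0) :
    A *ᵥ v ≠ 0 := by
  have h := LinearMap.finrank_range_add_finrank_ker A.mulVecLin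
  rw [← Matrix.rank, hA, Module.finrank_fintype_fun_eq_card, Nat.add_eq_left,
    Submodule.finrank_eq_zero, Matrix.ker_mulVecLin_eq_bot_iff] at h
  exact fun hAv => hv (h v hAv)

section nsq

variable {n : ℕ} (x y : Fin n → ℂ)

theorem ofReal_nsq : (nsq x : ℂ) = star x ⬝ᵥ x :=
  Complex.ext rfl (Complex.nonneg_iff.1 (dotProduct_star_self_nonneg x)).2

theorem nsq_nonneg : 0 ≤ nsq x := (Complex.nonneg_iff.1 (dotProduct_star_self_nonneg x)).1

variable {x y}

theorem nsq_pos (hx : x ≠ 0) : 0 < nsq x :=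
  (Complex.pos_iff.1 (dotProduct_star_self_pos_iff.2 hx)).1

theorem nsq_smul (c : ℂ) : nsq (c • x) = Complex.normSq c * nsq x := by
  apply Complex.ofReal_injective
  rw [ofReal_nsq, star_smul, smul_dotProduct, dotProduct_smul, Complex.ofReal_mul, ofReal_nsq,
    Complex.normSq_eq_conj_mul_self]
  simp [smul_eq_mul, mul_assoc]

theorem nsq_add_of_orthogonal (h : star x ⬝ᵥ y = 0) : nsq (x + y) = nsq x + nsq y := by
  have h' : star y ⬝ᵥ x = 0 := by rw [star_dotProduct, h, star_zero]
  simp only [nsq, star_add, add_dotProduct, dotProduct_add, h, h', add_zero, zero_add,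
    Complex.add_re]

end nsq

section chordalSq

variable {n : ℕ} {x y : Fin n → ℂ}

theorem chordalSq_eq_one_of_orthogonal (h : star x ⬝ᵥ y = 0) : chordalSq x y = 1 := by
  simp [chordalSq, h]

theorem chordalSq_lt_one (h : star x ⬝ᵥ y ≠ 0) : chordalSq x y < 1 := by
  have hx : x ≠ 0 := by rintro rfl; simp at h
  have hy : y ≠ 0 := by rintro rfl; simp at h
  have := nsq_pos hx
  have := nsq_pos hy
  rw [chordalSq, sub_lt_self_iff]
  positivity

theorem chordalSq_smul_right {c : ℂ} (hc : c ≠ 0) : chordalSq x (c • y) = chordalSq x y := by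
  rw [chordalSq, chordalSq, dotProduct_smul, smul_eq_mul, norm_mul, mul_pow, nsq_smul,
    ← Complex.sq_norm, mul_left_comm, mul_div_mul_left _ _ (by positivity)]

theorem chordalSq_add_of_orthogonal (h : star x ⬝ᵥ y = 0) :
    chordalSq x (x + y) = 1 - nsq x / (nsq x + nsq y) := by
  rw [chordalSq, nsq_add_of_orthogonal h, dotProduct_add, h, add_zero, ← ofReal_nsq,
    Complex.norm_real, Real.norm_of_nonneg (nsq_nonneg x)]
  rcases eq_or_ne (nsq x) 0 with hx | hx
  · simp [hx]
  · rw [sq, mul_div_mul_left _ _ hx]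

end chordalSq

theorem div_add_ne_half {a b : ℝ} (hab : a ≠ b) : a / (a + b) ≠ 1 / 2 := by
  intro h
  rcases eq_or_ne (a + b) 0 with h0 | h0
  · norm_num [h0] at h
  · rw [div_eq_div_iff h0 two_ne_zero] at h
    exact hab (by linarith)

section gram

variable {N K : ℕ} (V : Matrix (Fin N) (Fin K) ℂ)

theorem stdBasis_ne_zero (i : Fin K) : stdBasis i ≠ 0 := by
  simp [_root_.stdBasis]

theorem star_mulVec_stdBasis_dotProduct (i j : Fin K) :
    star (V *ᵥ stdBasis i) ⬝ᵥ V *ᵥ stdBasis j = (Vᴴ * V) i j := by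
  simp [_root_.stdBasis, dotProduct, mul_apply]

theorem star_stdBasis_dotProduct (i j : Fin K) :
    star (stdBasis i) ⬝ᵥ stdBasis j = (1 : Matrix (Fin K) (Fin K) ℂ) i j := by
  simpa using star_mulVec_stdBasis_dotProduct (1 : Matrix (Fin K) (Fin K) ℂ) i j

theorem chordalSq_stdBasis {i j : Fin K} (hij : i ≠ j) :
    chordalSq (stdBasis i) (stdBasis j) = 1 :=
  chordalSq_eq_one_of_orthogonal (by rw [star_stdBasis_dotProduct, one_apply_ne hij])

theorem ofReal_re_gram_apply_self (i : Fin K) : (((Vᴴ * V) i i).re : ℂ) = (Vᴴ * V) i i := by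
  rw [← star_mulVec_stdBasis_dotProduct]
  exact ofReal_nsq _

theorem chordalSq_mulVec_stdBasis_add {i j : Fin K} (hij : (Vᴴ * V) i j = 0) :
    chordalSq (V *ᵥ stdBasis i) (V *ᵥ (stdBasis i + stdBasis j)) =
      1 - ((Vᴴ * V) i i).re / (((Vᴴ * V) i i).re + ((Vᴴ * V) j j).re) := by
  rw [mulVec_add, chordalSq_add_of_orthogonal (by rwa [star_mulVec_stdBasis_dotProduct]), nsq, nsq,
    star_mulVec_stdBasis_dotProduct, star_mulVec_stdBasis_dotProduct]

theorem chordalSq_mulVec_stdBasis_add_ne {i j : Fin K} (hij : i ≠ j) (hdiag : (Vᴴ * V).IsDiag)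
    (hne : (Vᴴ * V) i i ≠ (Vᴴ * V) j j) :
    chordalSq (V *ᵥ stdBasis i) (V *ᵥ (((Real.sqrt 2 : ℂ))⁻¹ • (stdBasis i + stdBasis j)))
      ≠ chordalSq (stdBasis i) (((Real.sqrt 2 : ℂ))⁻¹ • (stdBasis i + stdBasis j)) := by
  have hs : ((Real.sqrt 2 : ℂ))⁻¹ ≠ 0 := by simp
  have hstd : chordalSq (stdBasis i) (stdBasis i + stdBasis j) = 1 - 1 / 2 := by
    simpa [one_apply_ne hij, one_div, one_add_one_eq_two] using
      chordalSq_mulVec_stdBasis_add (1 : Matrix (Fin K) (Fin K) ℂ) (i := i) (j := j)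
        (by simp [one_apply_ne hij])
  rw [mulVec_smul, chordalSq_smul_right hs, chordalSq_smul_right hs, hstd,
    chordalSq_mulVec_stdBasis_add V (hdiag hij), Ne, sub_right_inj]
  refine div_add_ne_half fun h => hne ?_
  rw [← ofReal_re_gram_apply_self, h, ofReal_re_gram_apply_self]

theorem exists_gram_apply_self_ne (hrank : V.rank = K) (hdiag : (Vᴴ * V).IsDiag)
    (hnot : ¬ ∃ c : ℝ, 0 < c ∧ Vᴴ * V = (c : ℂ) • 1) :
    ∃ i j, i ≠ j ∧ (Vᴴ * V) i i ≠ (Vᴴ * V) j j := by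
  by_contra! hconst
  apply hnot
  rcases isEmpty_or_nonempty (Fin K) with hK | ⟨⟨i₀⟩⟩
  · exact ⟨1, one_pos, ext fun i => isEmptyElim i⟩
  have hpos : 0 < nsq (V *ᵥ stdBasis i₀) :=
    nsq_pos (mulVec_ne_zero_of_rank_eq_card (by simpa) (stdBasis_ne_zero i₀))
  refine ⟨_, hpos, ?_⟩
  rw [← (isDiag_iff_diagonal_diag _).1 hdiag, smul_one_eq_diagonal, nsq,
    star_mulVec_stdBasis_dotProduct, ofReal_re_gram_apply_self]
  congr 1
  funext i
  rcases eq_or_ne i i₀ with rfl | hi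
  · rfl
  · exact hconst i i₀ hi

end gram

/-- Converse direction of the isometry lemma: if `Vᴴ V` is not a positive multiple
of the identity, the chordal distance is not preserved; with specific witnesses. -/
theorem chordal_non_isometry_of_not_scaled_identity {N K : ℕ}
    (V : Matrix (Fin N) (Fin K) ℂ) (hrank : V.rank = K)
    (hnot : ¬ ∃ c : ℝ, 0 < c ∧ Vᴴ * V = (c : ℂ) • 1) :
    (∃ b₁ b₂ : Fin K → ℂ, b₁ ≠ 0 ∧ b₂ ≠ 0 ∧
        chordalSq (V.mulVec b₁) (V.mulVec b₂) ≠ chordalSq b₁ b₂) ∧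
    (∀ i j : Fin K, i ≠ j → (Vᴴ * V) i j ≠ 0 →
        chordalSq (stdBasis i) (stdBasis j) = 1 ∧
        chordalSq (V.mulVec (stdBasis i)) (V.mulVec (stdBasis j)) < 1) ∧
    (∀ i j : Fin K, i ≠ j → (Vᴴ * V).IsDiag → (Vᴴ * V) i i ≠ (Vᴴ * V) j j →
        chordalSq (V.mulVec (stdBasis i))
            (V.mulVec (((Real.sqrt 2 : ℂ))⁻¹ • (stdBasis i + stdBasis j)))
          ≠ chordalSq (stdBasis i)
            (((Real.sqrt 2 : ℂ))⁻¹ • (stdBasis i + stdBasis j))) := by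
  have offDiag {i j : Fin K} (hij : i ≠ j) (hG : (Vᴴ * V) i j ≠ 0) :
      chordalSq (stdBasis i) (stdBasis j) = 1 ∧
        chordalSq (V *ᵥ stdBasis i) (V *ᵥ stdBasis j) < 1 :=
    ⟨chordalSq_stdBasis hij, chordalSq_lt_one (by rwa [star_mulVec_stdBasis_dotProduct])⟩
  refine ⟨?_, fun i j hij hG => offDiag hij hG,
    fun i j hij hdiag hne => chordalSq_mulVec_stdBasis_add_ne V hij hdiag hne⟩
  by_cases hdiag : (Vᴴ * V).IsDiag
  · obtain ⟨i, j, hij, hne⟩ := exists_gram_apply_self_ne V hrank hdiag hnot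
    have hsum : stdBasis i + stdBasis j ≠ 0 := fun h => by
      simpa [_root_.stdBasis, hij.symm] using congrFun h i
    exact ⟨_, _, stdBasis_ne_zero i, smul_ne_zero (by simp) hsum,
      chordalSq_mulVec_stdBasis_add_ne V hij hdiag hne⟩
  · obtain ⟨i, j, hij, hG⟩ : ∃ i j, i ≠ j ∧ (Vᴴ * V) i j ≠ 0 := by
      simpa [IsDiag, Pairwise] using hdiag
    obtain ⟨hstd, hlt⟩ := offDiag hij hG
    exact ⟨_, _, stdBasis_ne_zero i, stdBasis_ne_zero j, hstd ▸ hlt.ne⟩
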